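/- Jacobi's identity for Pfaffians: if K is an invertible skew-symmetric 2n×2n matrix and E is a subset of indices of even cardinality, then Pf(K_{E^c}) = ± Pf(K) · Pf((K^{-1})_E), where K_{E^c} denotes the principal submatrix of K on the complement of E and (K^{-1})_E the principal submatrix of K^{-1} on E. In particular |Pf(K_{E^c})| = |Pf(K)| · |Pf((K^{-1})_E)| over the reals. -/

import Mathlib

open Finset

/-- The Pfaffian of a `2n × 2n` real matrix, defined by the sum-over-permutations formula
`Pf(A) = (1/(2^n n!)) ∑_{σ} sgn σ ∏_{i<n} A_{σ(2i), σ(2i+1)}`. -/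
noncomputable def pfaffian (n : ℕ) (A : Matrix (Fin (2 * n)) (Fin (2 * n)) ℝ) : ℝ :=
  (((2 ^ n * Nat.factorial n : ℕ) : ℝ))⁻¹ *
    ∑ σ : Equiv.Perm (Fin (2 * n)),
      ((Equiv.Perm.sign σ : ℤ) : ℝ) *
        ∏ i : Fin n, A (σ ⟨2 * i.val, by omega⟩) (σ ⟨2 * i.val + 1, by omega⟩)

/-!
Both sides are determined up to sign by their squares, and `Pf(A)² = det A` for every skew
matrix `A`. After squaring, the claim is Jacobi's complementary minor identity
`det K_{Eᶜ} = det K · det (K⁻¹)_E`; writing `K` in blocks over `E ⊕ Eᶜ`, it follows by taking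
determinants in `K · [[(K⁻¹)_{EE}, 0], [(K⁻¹)_{EᶜE}, 1]] = [[1, K_{EEᶜ}], [0, K_{EᶜEᶜ}]]`.

For `Pf(A)² = det A`, index the rows by pairs `(i, b)` with `b ∈ {0, 1}`. The Pfaffian sum
transforms under congruence as `Pf(BᵀAB) = det B · Pf(A)`: expanding the product turns it into a
sum over all maps `f` of the index set, and the maps that are not injective contribute a
determinant with two equal rows. Every skew matrix is a congruence image `BᵀDB` of a block
diagonal `D` with blocks `[[0, εᵢ], [-εᵢ, 0]]`: a nonzero entry is moved into the top left corner,
the resulting `2 × 2` block is split off by a Schur complement congruence, and one inducts. The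
permutations contributing to the Pfaffian sum of `D` are exactly those that permute the blocks,
so that sum is `n! 2ⁿ ∏ εᵢ`, while `det D = ∏ εᵢ²`.
-/

open Equiv Equiv.Perm Matrix

namespace Equiv

theorem exists_apply_eq_apply_eq {α β : Type*} [DecidableEq β] (e : α ≃ β) {a₀ a₁ : α}
    {b₀ b₁ : β} (ha : a₀ ≠ a₁) (hb : b₀ ≠ b₁) : ∃ f : α ≃ β, f a₀ = b₀ ∧ f a₁ = b₁ := by
  set f₁ := e.trans (swap (e a₀) b₀)
  have h₀ : f₁ a₀ = b₀ := swap_apply_left _ _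
  refine ⟨f₁.trans (swap (f₁ a₁) b₁), ?_, swap_apply_left _ _⟩
  rw [trans_apply, swap_apply_of_ne_of_ne (f₁.injective.ne ha) (by rwa [h₀]), h₀]

/-- `inl b ↦ (0, b)` and `inr (j, b) ↦ (j.succ, b)`. -/
def finSuccProdEquiv (n : ℕ) (β : Type*) : β ⊕ Fin n × β ≃ Fin (n + 1) × β :=
  optionProdEquiv.symm.trans (prodCongr (finSuccEquiv n).symm (Equiv.refl β))

namespace Perm

variable {α β : Type*}

theorem sign_prodShear [Fintype α] [DecidableEq α] [Fintype β] [DecidableEq β]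
    (π : Perm α) (s : α → Perm β) :
    sign (prodShear π s) = sign π ^ Fintype.card β * ∏ a, sign (s a) := by
  rw [show prodShear π s = prodCongrLeft (fun _ => π) * prodCongrRight s from
      Equiv.ext fun _ => rfl, sign_mul, sign_prodCongrLeft, sign_prodCongrRight,
    Finset.prod_const, Finset.card_univ]

theorem injective_prodShear [Nonempty β] :
    Function.Injective fun πs : Perm α × (α → Perm β) => prodShear πs.1 πs.2 := by
  rintro ⟨π, s⟩ ⟨π', s'⟩ h
  have h' (a b) : (π a, s a b) = (π' a, s' a b) := congrArg (· (a, b)) h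
  obtain ⟨b₀⟩ := ‹Nonempty β›
  exact Prod.ext (Equiv.ext fun a => congrArg Prod.fst (h' a b₀))
    (funext fun a => Equiv.ext fun b => congrArg Prod.snd (h' a b))

theorem exists_eq_prodShear [Finite α] [Finite β] (σ : Perm (α × β)) (b₀ : β)
    (h : ∀ a b, (σ (a, b)).1 = (σ (a, b₀)).1) :
    ∃ (π : Perm α) (s : α → Perm β), σ = prodShear π s := by
  have hsurj : Function.Surjective fun a => (σ (a, b₀)).1 := fun a' => by
    obtain ⟨⟨a, b⟩, hab⟩ := σ.surjective (a', b₀)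
    exact ⟨a, (h a b).symm.trans (congrArg Prod.fst hab)⟩
  have hinj (a : α) : Function.Injective fun b => (σ (a, b)).2 := fun b b' hb =>
    congrArg Prod.snd (σ.injective (Prod.ext ((h a b).trans (h a b').symm) hb))
  refine ⟨ofBijective _ (Finite.surjective_iff_bijective.mp hsurj),
    fun a => ofBijective _ (Finite.injective_iff_bijective.mp (hinj a)), ?_⟩
  ext ⟨a, b⟩
  exacts [h a b, rfl]

end Perm

end Equiv

theorem prod_sum_sum_eq_sum_pairing {κ α R : Type*} [Fintype κ] [DecidableEq κ] [Fintype α]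
    [CommSemiring R] (h : κ → α → α → R) :
    ∏ i, ∑ p, ∑ q, h i p q = ∑ f : κ × Fin 2 → α, ∏ i, h i (f (i, 0)) (f (i, 1)) := by
  calc ∏ i, ∑ p, ∑ q, h i p q = ∏ i, ∑ g : Fin 2 → α, h i (g 0) (g 1) := by
        congr! 1 with i
        rw [← Fintype.sum_prod_type', ← (finTwoArrowEquiv α).sum_comp]
        rfl
    _ = ∑ f : κ × Fin 2 → α, ∏ i, h i (f (i, 0)) (f (i, 1)) := by
        rw [Fintype.prod_sum, ← (Equiv.curry κ (Fin 2) α).sum_comp]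
        rfl

theorem sum_fun_eq_sum_perm {α R : Type*} [Fintype α] [DecidableEq α] [AddCommMonoid R]
    (F : (α → α) → R) (hF : ∀ f, ¬Function.Injective f → F f = 0) :
    ∑ f, F f = ∑ σ : Perm α, F σ := by
  refine (Fintype.sum_of_injective _ DFunLike.coe_injective _ _ (fun f hf => hF f ?_)
    fun _ => rfl).symm
  exact fun hinj => hf ⟨ofBijective f (Finite.injective_iff_bijective.mp hinj), rfl⟩

namespace Matrix

section Skew

variable {m l n R : Type*} [CommRing R]

theorem transpose_submatrix_eq_neg {A : Matrix n n R} (hA : Aᵀ = -A) (f : m → n) :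
    (A.submatrix f f)ᵀ = -A.submatrix f f := by
  rw [transpose_submatrix, hA, submatrix_neg]
  rfl

theorem transpose_nonsing_inv_eq_neg [Fintype m] [DecidableEq m] {A : Matrix m m R}
    (hA : Aᵀ = -A) (h : IsUnit A.det) : A⁻¹ᵀ = -A⁻¹ := by
  rw [transpose_nonsing_inv, hA]
  exact inv_eq_left_inv (by rw [neg_mul_neg, nonsing_inv_mul _ h])

theorem submatrix_transpose_mul_mul {m' n' : Type*} [Fintype m] [Fintype m'] (A : Matrix m m R)
    (B : Matrix m n R) (e : m' ≃ m) (f : n' → n) :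
    (Bᵀ * A * B).submatrix f f = (B.submatrix e f)ᵀ * A.submatrix e e * B.submatrix e f := by
  rw [transpose_submatrix, submatrix_mul_equiv, submatrix_mul_equiv]

theorem exists_eq_transpose_mul_fromBlocks_mul [Fintype m] [DecidableEq m] [Fintype l]
    [DecidableEq l] (M : Matrix (m ⊕ l) (m ⊕ l) R) (hM : Mᵀ = -M)
    (h : IsUnit M.toBlocks₁₁.det) :
    ∃ (U : Matrix (m ⊕ l) (m ⊕ l) R) (S : Matrix l l R),
      Sᵀ = -S ∧ M = Uᵀ * fromBlocks M.toBlocks₁₁ 0 0 S * U := by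
  have h₁₁ : M.toBlocks₁₁ᵀ = -M.toBlocks₁₁ := congrArg toBlocks₁₁ hM
  have h₂₁ : M.toBlocks₂₁ = -M.toBlocks₁₂ᵀ := by
    rw [← neg_eq_iff_eq_neg]
    exact (congrArg toBlocks₂₁ hM).symm
  have h₂₂ : M.toBlocks₂₂ᵀ = -M.toBlocks₂₂ := congrArg toBlocks₂₂ hM
  have hinv := transpose_nonsing_inv_eq_neg h₁₁ h
  have := M.toBlocks₁₁.invertibleOfIsUnitDet h
  -- By skewness the lower unitriangular factor of the block LDU decomposition is the transpose
  -- of the upper one, and the Schur complement `S` is skew.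
  refine ⟨fromBlocks 1 (⅟M.toBlocks₁₁ * M.toBlocks₁₂) 0 1,
    M.toBlocks₂₂ - M.toBlocks₂₁ * ⅟M.toBlocks₁₁ * M.toBlocks₁₂, ?_, ?_⟩
  · rw [h₂₁]
    simp [transpose_mul, h₂₂, hinv, Matrix.mul_assoc, add_comm]
  · conv_lhs => rw [← fromBlocks_toBlocks M, fromBlocks_eq_of_invertible₁₁]
    rw [fromBlocks_transpose]
    simp [h₂₁, transpose_mul, hinv]

end Skew

section Jacobi

variable {ι R : Type*} [Fintype ι] [DecidableEq ι] [CommRing R]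

theorem det_toBlocks₂₂_eq_det_mul_det_inv_toBlocks₁₁ {m l : Type*} [Fintype m] [DecidableEq m]
    [Fintype l] [DecidableEq l] (M : Matrix (m ⊕ l) (m ⊕ l) R) (hM : IsUnit M.det) :
    M.toBlocks₂₂.det = M.det * M⁻¹.toBlocks₁₁.det := by
  have hMN : fromBlocks M.toBlocks₁₁ M.toBlocks₁₂ M.toBlocks₂₁ M.toBlocks₂₂ *
      fromBlocks M⁻¹.toBlocks₁₁ M⁻¹.toBlocks₁₂ M⁻¹.toBlocks₂₁ M⁻¹.toBlocks₂₂ =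
        fromBlocks 1 0 0 1 := by
    rw [fromBlocks_toBlocks, fromBlocks_toBlocks, fromBlocks_one, M.mul_nonsing_inv hM]
  rw [fromBlocks_multiply] at hMN
  obtain ⟨h₁₁, -, h₂₁, -⟩ := fromBlocks_inj.mp hMN
  have hprod : M * fromBlocks M⁻¹.toBlocks₁₁ 0 M⁻¹.toBlocks₂₁ 1 =
      fromBlocks 1 M.toBlocks₁₂ 0 M.toBlocks₂₂ := by
    calc M * _ = fromBlocks M.toBlocks₁₁ M.toBlocks₁₂ M.toBlocks₂₁ M.toBlocks₂₂ *
          fromBlocks M⁻¹.toBlocks₁₁ 0 M⁻¹.toBlocks₂₁ 1 := by rw [fromBlocks_toBlocks]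
      _ = _ := by simp [fromBlocks_multiply, h₁₁, h₂₁]
  have hdet := congrArg det hprod
  rwa [det_mul, det_fromBlocks_zero₁₂, det_fromBlocks_zero₂₁, det_one, det_one, mul_one, one_mul,
    eq_comm] at hdet

theorem det_submatrix_compl (A : Matrix ι ι R) (hA : IsUnit A.det) (s : Finset ι) :
    (A.submatrix (Subtype.val : {i // i ∉ s} → ι) Subtype.val).det =
      A.det * (A⁻¹.submatrix (Subtype.val : s → ι) Subtype.val).det := by
  have h := det_toBlocks₂₂_eq_det_mul_det_inv_toBlocks₁₁
    (A.submatrix (sumCompl (· ∈ s)) (sumCompl (· ∈ s))) (by rwa [det_submatrix_equiv_self])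
  rwa [inv_submatrix_equiv, det_submatrix_equiv_self] at h

end Jacobi

section Pairing

variable {κ R : Type*} [DecidableEq κ] [CommRing R]

def pairingSum [Fintype κ] (A : Matrix (κ × Fin 2) (κ × Fin 2) R) : R :=
  ∑ σ : Perm (κ × Fin 2), ((sign σ : ℤ) : R) * ∏ i, A (σ (i, 0)) (σ (i, 1))

theorem pairingSum_transpose_mul_mul [Fintype κ] (A B : Matrix (κ × Fin 2) (κ × Fin 2) R) :
    pairingSum (Bᵀ * A * B) = B.det * pairingSum A := by
  set P : (κ × Fin 2 → κ × Fin 2) → R := fun f => ∏ i, A (f (i, 0)) (f (i, 1))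
  have hentry (x y) : (Bᵀ * A * B) x y = ∑ p, ∑ q, B p x * A p q * B q y := by
    simp only [mul_apply, transpose_apply, Finset.sum_mul]
    exact Finset.sum_comm
  have hexpand (σ : Perm (κ × Fin 2)) : ∏ i, (Bᵀ * A * B) (σ (i, 0)) (σ (i, 1)) =
      ∑ f, P f * ∏ x, B (f x) (σ x) := by
    simp_rw [hentry, prod_sum_sum_eq_sum_pairing, Fintype.prod_prod_type, Fin.prod_univ_two,
      P, ← Finset.prod_mul_distrib]
    congr! 2
    ring
  have hdet (f : κ × Fin 2 → κ × Fin 2) :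
      ∑ σ : Perm (κ × Fin 2), ((sign σ : ℤ) : R) * ∏ x, B (f x) (σ x) =
        (B.submatrix f id).det := by
    rw [← det_transpose, det_apply']
    rfl
  calc pairingSum (Bᵀ * A * B) = ∑ f, P f * (B.submatrix f id).det := by
        simp_rw [pairingSum, hexpand, Finset.mul_sum, ← hdet, Finset.mul_sum]
        rw [Finset.sum_comm]
        congr! 2
        ring
    _ = ∑ σ : Perm (κ × Fin 2), P σ * (B.submatrix σ id).det := by
        refine sum_fun_eq_sum_perm _ fun f hf => ?_
        obtain ⟨x, y, hxy, hne⟩ := Function.not_injective_iff.mp hf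
        rw [det_zero_of_row_eq hne (by ext; simp [hxy]), mul_zero]
    _ = B.det * pairingSum A := by
        simp_rw [det_permute, pairingSum, Finset.mul_sum, P]
        congr! 1
        ring

def skewBlockDiagonal (ε : κ → R) : Matrix (κ × Fin 2) (κ × Fin 2) R :=
  (blockDiagonal fun i => !![0, ε i; -ε i, 0]).submatrix Prod.swap Prod.swap

theorem skewBlockDiagonal_apply (ε : κ → R) (x y : κ × Fin 2) :
    skewBlockDiagonal ε x y = if x.1 = y.1 then !![0, ε x.1; -ε x.1, 0] x.2 y.2 else 0 := by
  simp [skewBlockDiagonal, blockDiagonal_apply]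

theorem det_skewBlockDiagonal [Fintype κ] (ε : κ → R) :
    (skewBlockDiagonal ε).det = ∏ i, ε i ^ 2 := by
  rw [skewBlockDiagonal, ← coe_prodComm, det_submatrix_equiv_self, det_blockDiagonal]
  simp [det_fin_two_of, sq]

theorem pairingSum_skewBlockDiagonal [Fintype κ] (ε : κ → R) :
    pairingSum (skewBlockDiagonal ε) =
      ((Fintype.card κ).factorial * 2 ^ Fintype.card κ : ℕ) * ∏ i, ε i := by
  rw [pairingSum, ← Fintype.sum_of_injective _ injective_prodShear (fun _ => ∏ i, ε i)]
  · simp [Fintype.card_perm, Finset.card_univ]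
  · intro σ hσ
    obtain ⟨i, hi⟩ : ∃ i, (σ (i, 0)).1 ≠ (σ (i, 1)).1 := by
      by_contra! h
      obtain ⟨π, s, rfl⟩ := Perm.exists_eq_prodShear σ 0 fun i b => by
        fin_cases b
        exacts [rfl, (h i).symm]
      exact hσ ⟨(π, s), rfl⟩
    rw [Finset.prod_eq_zero (Finset.mem_univ i) (by rw [skewBlockDiagonal_apply, if_neg hi]),
      mul_zero]
  · rintro ⟨π, s⟩
    have hblock (c : R) (p : Perm (Fin 2)) :
        !![0, c; -c, 0] (p 0) (p 1) = ((sign p : ℤ) : R) * c := by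
      rcases (by decide : ∀ q : Perm (Fin 2), q = 1 ∨ q = Equiv.swap 0 1) p with rfl | rfl <;>
        simp
    have hterm (i : κ) :
        skewBlockDiagonal ε (prodShear π s (i, 0)) (prodShear π s (i, 1)) =
          ((sign (s i) : ℤ) : R) * ε (π i) := by
      change skewBlockDiagonal ε (π i, s i 0) (π i, s i 1) = _
      rw [skewBlockDiagonal_apply, if_pos rfl]
      exact hblock _ _
    simp only [sign_prodShear, Fintype.card_fin, Int.units_sq, one_mul]
    simp_rw [hterm, Finset.prod_mul_distrib, Units.coe_prod, Int.cast_prod, ← mul_assoc,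
      ← Finset.prod_mul_distrib, ← Int.cast_mul, ← Units.val_mul, Int.units_mul_self]
    simp [Equiv.prod_comp]

theorem skewBlockDiagonal_cons_submatrix {n : ℕ} (c : R) (ε : Fin n → R) :
    (skewBlockDiagonal (Fin.cons c ε : Fin (n + 1) → R)).submatrix (finSuccProdEquiv n (Fin 2))
      (finSuccProdEquiv n (Fin 2)) = fromBlocks !![0, c; -c, 0] 0 0 (skewBlockDiagonal ε) := by
  ext (a | ⟨i, a⟩) (b | ⟨j, b⟩) <;>
    simp [finSuccProdEquiv, skewBlockDiagonal_apply, Fin.succ_ne_zero,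
      eq_comm (a := (0 : Fin (n + 1)))]

theorem exists_toBlocks₁₁_submatrix_eq {ι X K : Type*} [DecidableEq ι] [Field K]
    [NeZero (2 : K)] (g : Fin 2 ⊕ X ≃ ι) {A : Matrix ι ι K} (hA : Aᵀ = -A) {p q : ι}
    (hpq : A p q ≠ 0) :
    ∃ f : Fin 2 ⊕ X ≃ ι, (A.submatrix f f).toBlocks₁₁ = !![0, A p q; -A p q, 0] := by
  have hskew (x y) : A y x = -A x y := congrFun₂ hA x y
  have hdiag (x) : A x x = 0 := by
    have h2 : (2 : K) * A x x = 0 := by linear_combination hskew x x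
    exact (mul_eq_zero.mp h2).resolve_left two_ne_zero
  obtain ⟨f, hf₀, hf₁⟩ := g.exists_apply_eq_apply_eq (a₀ := .inl 0) (a₁ := .inl 1) (by simp)
    fun h : p = q => hpq (by rw [h, hdiag])
  refine ⟨f, ?_⟩
  ext a b
  fin_cases a <;> fin_cases b <;> simp [toBlocks₁₁, hf₀, hf₁, hdiag, hskew q p]

theorem exists_eq_transpose_mul_skewBlockDiagonal_mul {K : Type*} [Field K] [NeZero (2 : K)]
    {n : ℕ} (A : Matrix (Fin n × Fin 2) (Fin n × Fin 2) K) (hA : Aᵀ = -A) :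
    ∃ (B : Matrix (Fin n × Fin 2) (Fin n × Fin 2) K) (ε : Fin n → K),
      A = Bᵀ * skewBlockDiagonal ε * B := by
  induction n with
  | zero => exact ⟨0, 0, Subsingleton.elim _ _⟩
  | succ n ih =>
    by_cases hA0 : A = 0
    · exact ⟨0, 0, by simp [hA0]⟩
    obtain ⟨p, q, hpq⟩ : ∃ p q, A p q ≠ 0 := by
      by_contra! h
      exact hA0 (Matrix.ext h)
    set g := finSuccProdEquiv n (Fin 2)
    obtain ⟨f, hM₁₁⟩ := exists_toBlocks₁₁_submatrix_eq g hA hpq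
    set M := A.submatrix f f
    obtain ⟨U, S, hS, hMUS⟩ := exists_eq_transpose_mul_fromBlocks_mul M
      (transpose_submatrix_eq_neg hA _) (by simpa [hM₁₁, det_fin_two_of] using hpq)
    obtain ⟨B, ε, rfl⟩ := ih S hS
    have hblock : fromBlocks M.toBlocks₁₁ 0 0 (Bᵀ * skewBlockDiagonal ε * B) =
        (fromBlocks 1 0 0 B)ᵀ * fromBlocks M.toBlocks₁₁ 0 0 (skewBlockDiagonal ε) *
          fromBlocks 1 0 0 B := by
      simp [fromBlocks_transpose, fromBlocks_multiply]
    set W := fromBlocks 1 0 0 B * U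
    refine ⟨W.submatrix g.symm f.symm, Fin.cons (A p q) ε, ?_⟩
    calc A = M.submatrix f.symm f.symm := by simp [M]
      _ = (Wᵀ * fromBlocks !![0, A p q; -A p q, 0] 0 0 (skewBlockDiagonal ε) * W).submatrix
            f.symm f.symm := by
        rw [hMUS, hblock, ← hM₁₁]
        simp only [W, transpose_mul, Matrix.mul_assoc]
      _ = _ := by
        rw [← skewBlockDiagonal_cons_submatrix, submatrix_transpose_mul_mul _ _ g.symm]
        simp [g]

end Pairing

end Matrix

def pairEquiv (n : ℕ) : Fin n × Fin 2 ≃ Fin (2 * n) :=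
  finProdFinEquiv.trans (finCongr (Nat.mul_comm n 2))

theorem pairEquiv_apply_val {n : ℕ} (x : Fin n × Fin 2) :
    (pairEquiv n x).val = 2 * x.1.val + x.2.val := by
  simp [pairEquiv, finProdFinEquiv]
  omega

theorem pfaffian_eq_pairingSum (n : ℕ) (A : Matrix (Fin (2 * n)) (Fin (2 * n)) ℝ) :
    pfaffian n A = ((2 ^ n * n.factorial : ℕ) : ℝ)⁻¹ *
      pairingSum (A.submatrix (pairEquiv n) (pairEquiv n)) := by
  have hlo (i : Fin n) (h) : (⟨2 * i.val, h⟩ : Fin (2 * n)) = pairEquiv n (i, 0) :=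
    Fin.ext (by simp [pairEquiv_apply_val])
  have hhi (i : Fin n) (h) : (⟨2 * i.val + 1, h⟩ : Fin (2 * n)) = pairEquiv n (i, 1) :=
    Fin.ext (by simp [pairEquiv_apply_val])
  rw [pfaffian, pairingSum]
  congr 1
  refine (Fintype.sum_equiv (pairEquiv n).permCongr _ _ fun τ => ?_).symm
  rw [Perm.sign_permCongr]
  congr 2 with i
  simp [hlo, hhi, permCongr_apply]

theorem pfaffian_sq {n : ℕ} (A : Matrix (Fin (2 * n)) (Fin (2 * n)) ℝ) (hA : Aᵀ = -A) :
    pfaffian n A ^ 2 = A.det := by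
  obtain ⟨B, ε, hB⟩ := exists_eq_transpose_mul_skewBlockDiagonal_mul
    (A.submatrix (pairEquiv n) (pairEquiv n)) (transpose_submatrix_eq_neg hA _)
  have hdet : A.det = B.det ^ 2 * ∏ i, ε i ^ 2 := by
    rw [← det_submatrix_equiv_self (pairEquiv n), hB, det_mul, det_mul, det_transpose,
      det_skewBlockDiagonal]
    ring
  rw [pfaffian_eq_pairingSum, hB, pairingSum_transpose_mul_mul, pairingSum_skewBlockDiagonal,
    hdet, Fintype.card_fin, Finset.prod_pow]
  field_simp
  push_cast
  ring

/-- Jacobi's identity for Pfaffians: if `K` is an invertible skew-symmetric matrix indexed by a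
finite set `V` and `E ⊆ V` has even cardinality, then
`Pf(K_{Eᶜ}) = ± Pf(K) · Pf((K⁻¹)_E)`; in particular
`|Pf(K_{Eᶜ})| = |Pf(K)| · |Pf((K⁻¹)_E)|`. -/
theorem pfaffian_jacobi {V : Type*} [Fintype V] [DecidableEq V]
    (K : Matrix V V ℝ) (hskew : K.transpose = -K) (hinv : IsUnit K.det)
    (E : Finset V)
    (n k m : ℕ)
    (eV : V ≃ Fin (2 * n))
    (eE : {v : V // v ∈ E} ≃ Fin (2 * k))
    (eEc : {v : V // v ∉ E} ≃ Fin (2 * m))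
    (pfV pfE pfEc : ℝ)
    (hpfV : pfV = pfaffian n (K.submatrix eV.symm eV.symm))
    (hpfE : pfE = pfaffian k ((K⁻¹).submatrix
      (fun i => (eE.symm i : V)) (fun j => (eE.symm j : V))))
    (hpfEc : pfEc = pfaffian m (K.submatrix
      (fun i => (eEc.symm i : V)) (fun j => (eEc.symm j : V)))) :
    (pfEc = pfV * pfE ∨ pfEc = -(pfV * pfE)) ∧ |pfEc| = |pfV| * |pfE| := by
  have hKinv := transpose_nonsing_inv_eq_neg hskew hinv
  have hV : pfV ^ 2 = K.det := by
    rw [hpfV, pfaffian_sq _ (transpose_submatrix_eq_neg hskew _), det_submatrix_equiv_self]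
  have hE : pfE ^ 2 = (K⁻¹.submatrix (Subtype.val : E → V) Subtype.val).det := by
    rw [hpfE, pfaffian_sq _ (transpose_submatrix_eq_neg hKinv _)]
    exact det_submatrix_equiv_self eE.symm (K⁻¹.submatrix Subtype.val Subtype.val)
  have hEc : pfEc ^ 2 = (K.submatrix (Subtype.val : {v // v ∉ E} → V) Subtype.val).det := by
    rw [hpfEc, pfaffian_sq _ (transpose_submatrix_eq_neg hskew _)]
    exact det_submatrix_equiv_self eEc.symm (K.submatrix Subtype.val Subtype.val)
  have hsq : pfEc ^ 2 = (pfV * pfE) ^ 2 := by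
    rw [mul_pow, hV, hE, hEc]
    exact det_submatrix_compl K hinv E
  exact ⟨sq_eq_sq_iff_eq_or_eq_neg.mp hsq, by rw [← abs_mul, ← sq_eq_sq_iff_abs_eq_abs]; exact hsq⟩
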